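/- Let A ∈ (ℝ ∪ {−∞})^{m×n} be a regular matrix. Then the minimum of 𝟙ᵀ A x ⊗ (A x)⁻ 𝟙 over all regular vectors x ∈ ℝⁿ equals Δ = (A (𝟙ᵀ A)⁻)⁻ 𝟙, and this minimum is attained at every vector x = α (𝟙ᵀ A)⁻ with α ∈ ℝ. -/

import Mathlib

/-!
Write `p = 𝟙ᵀA` for the vector of column maxima and `x̂ = p⁻`. Since `a_ij ≤ p_j`, every entry of
`A x̂` is at most `𝟙 = 0`, so `𝟙ᵀ A x̂ ≤ 0`. For an arbitrary regular `x`, associativity gives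
`𝟙ᵀ A x = p x`, and splitting `a_ij x_j = (a_ij p_j⁻) (p_j x_j)` yields `A x ≤ (𝟙ᵀ A x) A x̂`; inverting
entrywise, `(A x̂)⁻ 𝟙 ≤ 𝟙ᵀ A x ⊗ (A x)⁻ 𝟙`, which is the lower bound `Δ`. The objective is invariant
under scaling `x`, and at `x̂` it equals `𝟙ᵀ A x̂ ⊗ Δ ≤ Δ`, so the bound is attained on the whole ray
`α x̂`.
-/

open Finset

noncomputable section

namespace MaxPlus

/-- Max-plus multiplicative inverse: `-a` for real `a`, `⊥` for `⊥`. -/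
def tinv (a : WithBot ℝ) : WithBot ℝ := WithBot.map (fun r => -r) a

/-- Max-plus rational power `a^(1/k) = a / k`. -/
def trt (a : WithBot ℝ) (k : ℕ) : WithBot ℝ := WithBot.map (fun r => r / (k : ℝ)) a

/-- A vector is regular if it has no `⊥` (= -∞) entries. -/
def Reg {n : ℕ} (x : Fin n → WithBot ℝ) : Prop := ∀ i, x i ≠ ⊥

/-- `cdot q x = q⁻ x`, the max-plus product of the conjugate row vector `q⁻` with `x`. -/
def cdot {n : ℕ} (q x : Fin n → WithBot ℝ) : WithBot ℝ :=
  Finset.univ.sup fun i => tinv (q i) + x i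

/-- Max-plus matrix-vector product. -/
def mulVec {m n : ℕ} (A : Matrix (Fin m) (Fin n) (WithBot ℝ)) (x : Fin n → WithBot ℝ) :
    Fin m → WithBot ℝ := fun i => Finset.univ.sup fun j => A i j + x j

/-- Max-plus matrix product. -/
def tmul {l m n : ℕ} (A : Matrix (Fin l) (Fin m) (WithBot ℝ))
    (B : Matrix (Fin m) (Fin n) (WithBot ℝ)) : Matrix (Fin l) (Fin n) (WithBot ℝ) :=
  fun i j => Finset.univ.sup fun k => A i k + B k j

/-- Multiplicative conjugate transpose of a matrix. -/
def conjM {m n : ℕ} (A : Matrix (Fin m) (Fin n) (WithBot ℝ)) :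
    Matrix (Fin n) (Fin m) (WithBot ℝ) := fun i j => tinv (A j i)

/-- Max-plus identity matrix. -/
def tId {n : ℕ} : Matrix (Fin n) (Fin n) (WithBot ℝ) := fun i j => if i = j then 0 else ⊥

/-- Max-plus matrix power. -/
def tpow {n : ℕ} (A : Matrix (Fin n) (Fin n) (WithBot ℝ)) : ℕ → Matrix (Fin n) (Fin n) (WithBot ℝ)
  | 0 => tId
  | k + 1 => tmul A (tpow A k)

/-- Max-plus trace. -/
def ttr {n : ℕ} (A : Matrix (Fin n) (Fin n) (WithBot ℝ)) : WithBot ℝ :=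
  Finset.univ.sup fun i => A i i

/-- `Tr(A) = tr A ⊕ tr A² ⊕ ⋯ ⊕ tr Aⁿ`. -/
def TrOp {n : ℕ} (A : Matrix (Fin n) (Fin n) (WithBot ℝ)) : WithBot ℝ :=
  (Finset.Icc 1 n).sup fun m => ttr (tpow A m)

/-- Kleene star `A* = I ⊕ A ⊕ ⋯ ⊕ A^(n-1)`. -/
def kstar {n : ℕ} (A : Matrix (Fin n) (Fin n) (WithBot ℝ)) : Matrix (Fin n) (Fin n) (WithBot ℝ) :=
  fun i j => (Finset.range n).sup fun k => tpow A k i j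

/-- Max-plus spectral radius `λ = ⊕_{m=1}^n (tr A^m)^(1/m)`. -/
def specRad {n : ℕ} (A : Matrix (Fin n) (Fin n) (WithBot ℝ)) : WithBot ℝ :=
  (Finset.Icc 1 n).sup fun m => trt (ttr (tpow A m)) m

/-- `prodAB A B [i₁, …, i_k] = A B^{i₁} A B^{i₂} ⋯ A B^{i_k}`. -/
def prodAB {n : ℕ} (A B : Matrix (Fin n) (Fin n) (WithBot ℝ)) :
    List ℕ → Matrix (Fin n) (Fin n) (WithBot ℝ)
  | [] => tId
  | i :: t => tmul (tmul A (tpow B i)) (prodAB A B t)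

/-- The all-ones (all-`𝟙 = 0`) vector. -/
def onesV (n : ℕ) : Fin n → WithBot ℝ := fun _ => 0

end MaxPlus

namespace MaxPlus

@[simp] lemma tinv_zero : tinv 0 = 0 := by
  simp [tinv]

lemma tinv_ne_bot {a : WithBot ℝ} (ha : a ≠ ⊥) : tinv a ≠ ⊥ := by
  simpa [tinv] using ha

lemma tinv_add (a b : WithBot ℝ) : tinv (a + b) = tinv a + tinv b := by
  induction a <;> induction b <;> simp [tinv, ← WithBot.coe_add, add_comm]

lemma add_tinv_le_zero (a : WithBot ℝ) : a + tinv a ≤ 0 := by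
  induction a <;> simp [tinv, ← WithBot.coe_add]

lemma add_tinv_self {a : WithBot ℝ} (ha : a ≠ ⊥) : a + tinv a = 0 := by
  induction a <;> simp_all [tinv, ← WithBot.coe_add]

lemma tinv_le_add_tinv {a b c : WithBot ℝ} (hb : b ≠ ⊥) (h : b ≤ a + c) :
    tinv a ≤ c + tinv b := by
  induction a <;> induction b <;> induction c <;> simp_all [tinv, ← WithBot.coe_add]

lemma const_add_sup {ι : Type*} (s : Finset ι) (f : ι → WithBot ℝ) (c : WithBot ℝ) :
    c + s.sup f = s.sup fun i => c + f i :=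
  apply_sup_eq_sup_comp_of_linearOrder (c + ·) (fun _ _ h => add_le_add_right h c)
    (WithBot.add_bot c)

lemma cdot_onesV_left {k : ℕ} (v : Fin k → WithBot ℝ) : cdot (onesV k) v = univ.sup v := by
  simp [cdot, onesV]

lemma cdot_onesV_right {k : ℕ} (v : Fin k → WithBot ℝ) :
    cdot v (onesV k) = univ.sup fun i => tinv (v i) := by
  simp [cdot, onesV]

/-- `𝟙ᵀ y ⊗ y⁻ 𝟙`, i.e. `max y - min y` for regular `y`. -/
def spanSeminorm {k : ℕ} (y : Fin k → WithBot ℝ) : WithBot ℝ :=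
  cdot (onesV k) y + cdot y (onesV k)

lemma spanSeminorm_const_add {k : ℕ} (c : ℝ) (y : Fin k → WithBot ℝ) :
    spanSeminorm (fun i => (c : WithBot ℝ) + y i) = spanSeminorm y := by
  simp only [spanSeminorm, cdot_onesV_left, cdot_onesV_right, tinv_add, ← const_add_sup]
  rw [add_add_add_comm, add_tinv_self WithBot.coe_ne_bot, zero_add]

section Matrix

variable {m n : ℕ} (A : Matrix (Fin m) (Fin n) (WithBot ℝ))

/-- The row vector `𝟙ᵀ A` of column maxima. -/
def colMax (j : Fin n) : WithBot ℝ := cdot (onesV m) fun i => A i j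

lemma colMax_eq_sup (j : Fin n) : colMax A j = univ.sup fun i => A i j :=
  cdot_onesV_left _

lemma le_colMax (i : Fin m) (j : Fin n) : A i j ≤ colMax A j := by
  rw [colMax_eq_sup]
  exact le_sup (f := fun i => A i j) (mem_univ i)

lemma colMax_ne_bot {j : Fin n} (hcol : ∃ i, A i j ≠ ⊥) : colMax A j ≠ ⊥ :=
  let ⟨i, hi⟩ := hcol
  ne_bot_of_le_ne_bot hi (le_colMax A i j)

lemma mulVec_ne_bot {x : Fin n → WithBot ℝ} {i : Fin m} (hrow : ∃ j, A i j ≠ ⊥) (hx : Reg x) :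
    mulVec A x i ≠ ⊥ :=
  let ⟨j, hj⟩ := hrow
  ne_bot_of_le_ne_bot (WithBot.add_ne_bot.mpr ⟨hj, hx j⟩)
    (le_sup (f := fun j => A i j + x j) (mem_univ j))

lemma mulVec_const_add (c : WithBot ℝ) (x : Fin n → WithBot ℝ) :
    mulVec A (fun j => c + x j) = fun i => c + mulVec A x i := by
  funext i
  simp only [mulVec, const_add_sup, add_left_comm c]

/-- Associativity `𝟙ᵀ (A x) = (𝟙ᵀ A) x`. -/
lemma cdot_onesV_mulVec (x : Fin n → WithBot ℝ) :
    cdot (onesV m) (mulVec A x) = univ.sup fun j => colMax A j + x j := by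
  simp only [cdot_onesV_left, colMax_eq_sup]
  change (univ.sup fun i => univ.sup fun j => A i j + x j) = _
  rw [Finset.sup_comm]
  simp only [add_comm _ (x _), const_add_sup]

lemma cdot_onesV_mulVec_tinv_colMax_le :
    cdot (onesV m) (mulVec A fun j => tinv (colMax A j)) ≤ 0 := by
  rw [cdot_onesV_mulVec]
  exact Finset.sup_le fun j _ => add_tinv_le_zero _

lemma mulVec_le_mulVec_tinv_colMax_add (x : Fin n → WithBot ℝ) (i : Fin m) :
    mulVec A x i ≤ mulVec A (fun j => tinv (colMax A j)) i + cdot (onesV m) (mulVec A x) := by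
  refine Finset.sup_le fun j _ => ?_
  by_cases hp : colMax A j = ⊥
  · have hA : A i j = ⊥ := le_bot_iff.mp (hp ▸ le_colMax A i j)
    simp [hA]
  calc A i j + x j = (A i j + tinv (colMax A j)) + (colMax A j + x j) := by
        rw [add_assoc, ← add_assoc (tinv _), add_comm (tinv _), add_tinv_self hp, zero_add]
    _ ≤ _ := by
        gcongr
        · exact le_sup (f := fun j => A i j + tinv (colMax A j)) (mem_univ j)
        · rw [cdot_onesV_mulVec]
          exact le_sup (f := fun j => colMax A j + x j) (mem_univ j)

lemma cdot_mulVec_tinv_colMax_le_spanSeminorm (hrow : ∀ i, ∃ j, A i j ≠ ⊥)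
    {x : Fin n → WithBot ℝ} (hx : Reg x) :
    cdot (mulVec A fun j => tinv (colMax A j)) (onesV m) ≤ spanSeminorm (mulVec A x) := by
  rw [cdot_onesV_right]
  refine Finset.sup_le fun i _ => ?_
  calc tinv (mulVec A (fun j => tinv (colMax A j)) i)
      ≤ cdot (onesV m) (mulVec A x) + tinv (mulVec A x i) :=
        tinv_le_add_tinv (mulVec_ne_bot A (hrow i) hx) (mulVec_le_mulVec_tinv_colMax_add A x i)
    _ ≤ spanSeminorm (mulVec A x) := by
        rw [spanSeminorm, cdot_onesV_right]
        gcongr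
        exact le_sup (f := fun i => tinv (mulVec A x i)) (mem_univ i)

end Matrix

end MaxPlus

open MaxPlus

/-- minimization of the span seminorm `𝟙ᵀ A x ⊗ (A x)⁻ 𝟙`. -/
theorem stmt_6 {m n : ℕ} (A : Matrix (Fin m) (Fin n) (WithBot ℝ))
    (hA : (∀ i, ∃ j, A i j ≠ ⊥) ∧ (∀ j, ∃ i, A i j ≠ ⊥))
    (Δ : WithBot ℝ)
    (hΔ : Δ = cdot (mulVec A
        (fun j => tinv (cdot (onesV m) (fun i => A i j)))) (onesV m)) :
    (∀ x : Fin n → WithBot ℝ, Reg x →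
        Δ ≤ cdot (onesV m) (mulVec A x) + cdot (mulVec A x) (onesV m)) ∧
      ∀ α : ℝ,
        Reg (fun j => (α : WithBot ℝ) + tinv (cdot (onesV m) (fun i => A i j))) ∧
        cdot (onesV m) (mulVec A
              (fun j => (α : WithBot ℝ) + tinv (cdot (onesV m) (fun i => A i j))))
            + cdot (mulVec A
              (fun j => (α : WithBot ℝ) + tinv (cdot (onesV m) (fun i => A i j)))) (onesV m)
          = Δ := by
  obtain ⟨hrow, hcol⟩ := hA
  change Δ = cdot (mulVec A fun j => tinv (colMax A j)) (onesV m) at hΔ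
  subst hΔ
  have lower := fun x (hx : Reg x) => cdot_mulVec_tinv_colMax_le_spanSeminorm A hrow hx
  have hreg : Reg fun j => tinv (colMax A j) := fun j => tinv_ne_bot (colMax_ne_bot A (hcol j))
  refine ⟨lower, fun α => ⟨fun j => WithBot.add_ne_bot.mpr ⟨WithBot.coe_ne_bot, hreg j⟩, ?_⟩⟩
  change spanSeminorm (mulVec A fun j => (α : WithBot ℝ) + tinv (colMax A j)) = _
  rw [mulVec_const_add, spanSeminorm_const_add]
  exact le_antisymm (add_le_of_nonpos_left (cdot_onesV_mulVec_tinv_colMax_le A))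
    (lower _ hreg)
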